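/- arXiv:2201.04246 — 4 statements merged into one kernel-verified Lean document; each statement's English description precedes it below -/
import Mathlib

section
/- Assume (f1), (f2), (f3), (f4). Then there exists $m_0>0$ such that for every $\tau\in(0,s_0)$ there is a constant $c_\tau>0$ with $c_\tau s^p\le\tfrac12 g_{m_0}(s)s-G_{m_0}(s)$ for all $s\in[\tau,\infty)$, and moreover $0<\tfrac12 g_{m_0}(s)s-G_{m_0}(s)$ for all $s\in(0,\infty)$. -/
open MeasureTheory Filter Topology Real Set

noncomputable section

/-- The modified nonlinearity `g_m(s) = ξ₁(s) f(s) + m η₁(s) s^(p-1)` for `s > 0`,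
`g_m(s) = 0` for `s ≤ 0`. -/
def modg (f ξ η : ℝ → ℝ) (p m : ℝ) : ℝ → ℝ :=
  fun s => if 0 < s then ξ s * f s + m * η s * s ^ (p - 1) else 0

/-- `G_m(s) = ∫₀ˢ g_m(t) dt`. -/
def modG (f ξ η : ℝ → ℝ) (p m : ℝ) : ℝ → ℝ :=
  fun s => ∫ t in (0:ℝ)..s, modg f ξ η p m t

set_option maxHeartbeats 1000000 in
/-- Lemma 2.1 (i): under (f1)–(f4) there is `m₀ > 0` such that for all
`τ ∈ (0, s₀)` there is `c_τ > 0` with `c_τ s^p ≤ ½ g_{m₀}(s) s - G_{m₀}(s)` for `s ≥ τ`,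
and `½ g_{m₀}(s) s - G_{m₀}(s) > 0` for all `s > 0`. -/
theorem statement6
    (N : ℕ) (hN : 1 ≤ N) (f : ℝ → ℝ) (p : ℝ)
    -- `p ∈ (2, 2^*)` from (f3)
    (hp : 2 < p) (hp' : 3 ≤ N → p < 2 * N / ((N : ℝ) - 2))
    -- (f1)
    (hf1 : Continuous f) (hf1' : ∀ s ≤ 0, f s = 0)
    -- (f2)
    (hf2 : Tendsto (fun s => f s / s) (𝓝[>] (0:ℝ)) (𝓝 0))
    -- (f3)
    (hf3 : ∃ c > 0, ∀ᶠ s in 𝓝[>] (0:ℝ), c * s ^ p ≤ ∫ t in (0:ℝ)..s, f t)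
    -- (f4)
    (hf4 : ∃ s₁ > 0, ∀ s, 0 < s → s ≤ s₁ →
      0 < (1/2) * (f s * s) - ∫ t in (0:ℝ)..s, f t)
    -- the scale `s₀` and constant `c₀` of (2.1)
    (s₀ c₀ : ℝ) (hs₀ : 0 < s₀) (hc₀ : 0 < c₀)
    (h21 : ∀ s, 0 < s → s ≤ 4 * s₀ →
      c₀ * s ^ p ≤ (∫ t in (0:ℝ)..s, f t) ∧
      0 < (1/2) * (f s * s) - ∫ t in (0:ℝ)..s, f t)
    -- the cut-off functions `ξ₁`, `η₁` of (2.3)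
    (ξ η : ℝ → ℝ)
    (hξ : ContDiff ℝ (⊤ : ℕ∞) ξ) (hξ1 : ∀ s ∈ Icc (0:ℝ) (3 * s₀), ξ s = 1)
    (hξ0 : ∀ s, 4 * s₀ ≤ s → ξ s = 0) (hξ' : ∀ s, 0 ≤ s → deriv ξ s ≤ 0)
    (hη : ContDiff ℝ (⊤ : ℕ∞) η) (hη0 : ∀ s ∈ Icc (0:ℝ) s₀, η s = 0)
    (hη1 : ∀ s, 2 * s₀ ≤ s → η s = 1) (hη' : ∀ s, 0 ≤ s → 0 ≤ deriv η s) :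
    ∃ m₀ > 0,
      (∀ τ, 0 < τ → τ < s₀ → ∃ cτ > 0, ∀ s, τ ≤ s →
        cτ * s ^ p ≤ (1/2) * (modg f ξ η p m₀ s * s) - modG f ξ η p m₀ s) ∧
      (∀ s, 0 < s →
        0 < (1/2) * (modg f ξ η p m₀ s * s) - modG f ξ η p m₀ s) := by
  have hp0 : (0:ℝ) < p := by linarith
  have hf0 : f 0 = 0 := hf1' 0 le_rfl
  have hη00 : η 0 = 0 := hη0 0 ⟨le_rfl, hs₀.le⟩
  have hξ00 : ξ 0 = 1 := hξ1 0 ⟨le_rfl, by nlinarith⟩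
  have hξ4 : ξ (4 * s₀) = 0 := hξ0 _ le_rfl
  have hξc : Continuous ξ := hξ.continuous
  have hηc : Continuous η := hη.continuous
  have hηd : Continuous (deriv η) := hη.continuous_deriv (by simp)
  have hrp1 : Continuous fun t : ℝ => t ^ (p - 1) := by
    rw [continuous_iff_continuousAt]
    intro x
    exact Real.continuousAt_rpow_const x (p - 1) (Or.inr (by linarith))
  have hrp : Continuous fun t : ℝ => t ^ p := by
    rw [continuous_iff_continuousAt]
    intro x
    exact Real.continuousAt_rpow_const x p (Or.inr (by linarith))
  set g1 : ℝ → ℝ := fun s => ξ s * f s with hg1def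
  set g2 : ℝ → ℝ := fun s => η s * s ^ (p - 1) with hg2def
  have hg1c : Continuous g1 := hξc.mul hf1
  have hg2c : Continuous g2 := hηc.mul hrp1
  have hg1i : ∀ a b : ℝ, IntervalIntegrable g1 volume a b :=
    fun a b => hg1c.intervalIntegrable a b
  have hg2i : ∀ a b : ℝ, IntervalIntegrable g2 volume a b :=
    fun a b => hg2c.intervalIntegrable a b
  have hfi : ∀ a b : ℝ, IntervalIntegrable f volume a b :=
    fun a b => hf1.intervalIntegrable a b
  have hmodg : ∀ m s, 0 ≤ s → modg f ξ η p m s = g1 s + m * g2 s := by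
    intro m s hs
    rcases hs.lt_or_eq with h | h
    · simp only [modg, if_pos h, hg1def, hg2def]; ring
    · rw [← h]; simp [modg, hg1def, hg2def, hf0, hη00]
  have hmodG : ∀ m s, 0 ≤ s → modG f ξ η p m s =
      (∫ t in (0:ℝ)..s, g1 t) + m * ∫ t in (0:ℝ)..s, g2 t := by
    intro m s hs
    have h1 : modG f ξ η p m s = ∫ t in (0:ℝ)..s, (g1 t + m * g2 t) := by
      apply intervalIntegral.integral_congr
      intro t ht
      rw [uIcc_of_le hs] at ht
      exact hmodg m t ht.1
    rw [h1, intervalIntegral.integral_add (hg1i 0 s) ((hg2i 0 s).const_mul m),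
      intervalIntegral.integral_const_mul]
  have hfpos : ∀ s, 0 < s → s ≤ 4 * s₀ → 0 < f s := by
    intro s hs hs4
    obtain ⟨h1, h2⟩ := h21 s hs hs4
    have hsp : 0 < s ^ p := Real.rpow_pos_of_pos hs p
    have h3 : 0 < f s * s := by nlinarith
    by_contra h
    push_neg at h
    nlinarith
  have hfnn : ∀ s, 0 ≤ s → s ≤ 4 * s₀ → 0 ≤ f s := by
    intro s hs hs4
    rcases hs.lt_or_eq with h | h
    · exact (hfpos s h hs4).le
    · rw [← h, hf0]
  have hξmono : AntitoneOn ξ (Ici 0) :=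
    antitoneOn_of_deriv_nonpos (convex_Ici 0) hξc.continuousOn
      (hξ.differentiable (by simp)).differentiableOn
      (by intro x hx; rw [interior_Ici] at hx; exact hξ' x hx.le)
  have hξnn : ∀ s, 0 ≤ s → 0 ≤ ξ s := by
    intro s hs
    rcases le_total s (4 * s₀) with h | h
    · rw [← hξ4]
      exact hξmono (mem_Ici.mpr hs) (mem_Ici.mpr (by positivity)) h
    · rw [hξ0 s h]
  have hξle : ∀ s, 0 ≤ s → ξ s ≤ 1 := by
    intro s hs
    rw [← hξ00]
    exact hξmono (mem_Ici.mpr le_rfl) (mem_Ici.mpr hs) hs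
  have hηmono : MonotoneOn η (Ici 0) :=
    monotoneOn_of_deriv_nonneg (convex_Ici 0) hηc.continuousOn
      (hη.differentiable (by simp)).differentiableOn
      (by intro x hx; rw [interior_Ici] at hx; exact hη' x hx.le)
  have hηnn : ∀ s, 0 ≤ s → 0 ≤ η s := by
    intro s hs
    rw [← hη00]
    exact hηmono (mem_Ici.mpr le_rfl) (mem_Ici.mpr hs) hs
  have hg1nn : ∀ s, 0 ≤ s → 0 ≤ g1 s := by
    intro s hs
    rcases le_total s (4 * s₀) with h | h
    · exact mul_nonneg (hξnn s hs) (hfnn s hs h)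
    · simp [hg1def, hξ0 s h]
  have hg2nn : ∀ s, 0 ≤ s → 0 ≤ g2 s :=
    fun s hs => mul_nonneg (hηnn s hs) (Real.rpow_nonneg hs _)
  set M : ℝ := ∫ t in (0:ℝ)..(4 * s₀), f t with hMdef
  have hM : 0 < M :=
    lt_of_lt_of_le (by positivity : (0:ℝ) < c₀ * (4 * s₀) ^ p)
      (h21 (4 * s₀) (by positivity) le_rfl).1
  have hF1le4 : ∀ s, 0 ≤ s → s ≤ 4 * s₀ → (∫ t in (0:ℝ)..s, g1 t) ≤ M := by
    intro s hs h
    have h1 : (∫ t in (0:ℝ)..s, g1 t) ≤ ∫ t in (0:ℝ)..s, f t := by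
      apply intervalIntegral.integral_mono_on hs (hg1i 0 s) (hfi 0 s)
      intro t ht
      have hft : 0 ≤ f t := hfnn t ht.1 (le_trans ht.2 h)
      calc ξ t * f t ≤ 1 * f t := mul_le_mul_of_nonneg_right (hξle t ht.1) hft
        _ = f t := one_mul _
    have h2 : (∫ t in (0:ℝ)..s, f t) ≤ M := by
      rw [hMdef, ← intervalIntegral.integral_add_adjacent_intervals (hfi 0 s) (hfi s (4 * s₀))]
      have h3 : 0 ≤ ∫ t in s..(4 * s₀), f t :=
        intervalIntegral.integral_nonneg h (fun t ht => hfnn t (le_trans hs ht.1) ht.2)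
      linarith
    linarith
  have hF1leM : ∀ s, 0 ≤ s → (∫ t in (0:ℝ)..s, g1 t) ≤ M := by
    intro s hs
    rcases le_total s (4 * s₀) with h | h
    · exact hF1le4 s hs h
    · have h3 : (∫ t in (0:ℝ)..(4 * s₀), g1 t) + ∫ t in (4 * s₀)..s, g1 t
          = ∫ t in (0:ℝ)..s, g1 t :=
        intervalIntegral.integral_add_adjacent_intervals (hg1i _ _) (hg1i _ _)
      have h4 : (∫ t in (4 * s₀)..s, g1 t) = 0 := by
        rw [intervalIntegral.integral_congr (g := fun _ => (0:ℝ)) ?_]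
        · exact intervalIntegral.integral_zero
        · intro t ht
          rw [uIcc_of_le h] at ht
          simp [hg1def, hξ0 t ht.1]
      have h5 := hF1le4 (4 * s₀) (by positivity) le_rfl
      linarith
  have hF2le : ∀ s, 0 ≤ s → (∫ t in (0:ℝ)..s, g2 t) ≤ η s * s ^ p / p := by
    intro s hs
    set ψ : ℝ → ℝ := fun t => η t * t ^ p / p with hψdef
    set ψ' : ℝ → ℝ := fun t => (deriv η t * t ^ p + η t * (p * t ^ (p - 1))) / p with hψ'def
    have hDψ : ∀ t, HasDerivAt ψ (ψ' t) t := by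
      intro t
      have h1 : HasDerivAt η (deriv η t) t := (hη.differentiable (by simp) t).hasDerivAt
      have h2 : HasDerivAt (fun x : ℝ => x ^ p) (p * t ^ (p - 1)) t :=
        Real.hasDerivAt_rpow_const (Or.inr (by linarith))
      exact (h1.mul h2).div_const p
    have hψ'c : Continuous ψ' :=
      ((hηd.mul hrp).add (hηc.mul (continuous_const.mul hrp1))).div_const p
    have hFTC : (∫ t in (0:ℝ)..s, ψ' t) = ψ s - ψ 0 :=
      intervalIntegral.integral_eq_sub_of_hasDerivAt (fun t _ => hDψ t)
        (hψ'c.intervalIntegrable 0 s)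
    have hψ0 : ψ 0 = 0 := by simp [hψdef, hη00]
    have hmono : (∫ t in (0:ℝ)..s, g2 t) ≤ ∫ t in (0:ℝ)..s, ψ' t := by
      apply intervalIntegral.integral_mono_on hs (hg2i 0 s) (hψ'c.intervalIntegrable 0 s)
      intro t ht
      have h1 : 0 ≤ deriv η t * t ^ p := mul_nonneg (hη' t ht.1) (Real.rpow_nonneg ht.1 p)
      have heq : (deriv η t * t ^ p + η t * (p * t ^ (p - 1))) / p
          = deriv η t * t ^ p / p + η t * t ^ (p - 1) := by
        field_simp
      simp only [hψ'def, hg2def]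
      rw [heq]
      have h2 := div_nonneg h1 hp0.le
      linarith
    calc (∫ t in (0:ℝ)..s, g2 t) ≤ ∫ t in (0:ℝ)..s, ψ' t := hmono
      _ = ψ s - ψ 0 := hFTC
      _ = η s * s ^ p / p := by rw [hψ0, sub_zero]
  have hsp1 : ∀ s : ℝ, 0 < s → s ^ (p - 1) * s = s ^ p := by
    intro s hs
    conv_rhs => rw [show p = (p - 1) + 1 by ring]
    rw [Real.rpow_add_one hs.ne']
  have hκ : (0:ℝ) < 1 / 2 - 1 / p := by
    have h1 : 1 / p < 1 / 2 := by
      rw [div_lt_div_iff₀ hp0 (by norm_num : (0:ℝ) < 2)]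
      linarith
    linarith
  have hBnn : ∀ s, 0 < s → 0 ≤ (1/2) * (g2 s * s) - ∫ t in (0:ℝ)..s, g2 t := by
    intro s hs
    have h1 := hF2le s hs.le
    have h2 : g2 s * s = η s * s ^ p := by
      simp only [hg2def]
      rw [mul_assoc, hsp1 s hs]
    have h4 : 0 ≤ η s * s ^ p := mul_nonneg (hηnn s hs.le) (Real.rpow_nonneg hs.le p)
    have h3 : η s * s ^ p / p ≤ (1/2) * (η s * s ^ p) := by
      rw [div_le_iff₀ hp0]
      nlinarith
    rw [h2]
    linarith
  have hBlow : ∀ s, 2 * s₀ ≤ s →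
      (1 / 2 - 1 / p) * s ^ p ≤ (1/2) * (g2 s * s) - ∫ t in (0:ℝ)..s, g2 t := by
    intro s hs
    have hs0 : 0 < s := lt_of_lt_of_le (by positivity) hs
    have hη1s : η s = 1 := hη1 s hs
    have h1 := hF2le s hs0.le
    rw [hη1s, one_mul] at h1
    have h2 : g2 s * s = s ^ p := by
      simp only [hg2def, hη1s, one_mul]
      exact hsp1 s hs0
    have h4 : (1 / 2 - 1 / p) * s ^ p = (1/2) * s ^ p - s ^ p / p := by
      field_simp
    rw [h2, h4]
    linarith
  have hAeq : ∀ s, 0 < s → s ≤ 3 * s₀ →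
      (1/2) * (g1 s * s) - (∫ t in (0:ℝ)..s, g1 t)
        = (1/2) * (f s * s) - ∫ t in (0:ℝ)..s, f t := by
    intro s hs hs3
    have h1 : g1 s = f s := by simp [hg1def, hξ1 s ⟨hs.le, hs3⟩]
    have h2 : (∫ t in (0:ℝ)..s, g1 t) = ∫ t in (0:ℝ)..s, f t := by
      apply intervalIntegral.integral_congr
      intro t ht
      rw [uIcc_of_le hs.le] at ht
      simp [hg1def, hξ1 t ⟨ht.1, le_trans ht.2 hs3⟩]
    rw [h1, h2]
  have hAlow : ∀ s, 0 ≤ s → -M ≤ (1/2) * (g1 s * s) - ∫ t in (0:ℝ)..s, g1 t := by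
    intro s hs
    have h1 : 0 ≤ g1 s * s := mul_nonneg (hg1nn s hs) hs
    have h2 := hF1leM s hs
    linarith
  set D : ℝ := (2 * s₀) ^ p with hDdef
  have hD : 0 < D := Real.rpow_pos_of_pos (by positivity) p
  set m₀ : ℝ := 1 + 2 * M / ((1 / 2 - 1 / p) * D) with hm₀def
  have hm₀ : 0 < m₀ := by
    have h1 := div_pos (by linarith : (0:ℝ) < 2 * M) (mul_pos hκ hD)
    rw [hm₀def]
    linarith
  have hHeq : ∀ s, 0 < s →
      (1/2) * (modg f ξ η p m₀ s * s) - modG f ξ η p m₀ s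
        = ((1/2) * (g1 s * s) - ∫ t in (0:ℝ)..s, g1 t)
          + m₀ * ((1/2) * (g2 s * s) - ∫ t in (0:ℝ)..s, g2 t) := by
    intro s hs
    rw [hmodg m₀ s hs.le, hmodG m₀ s hs.le]
    ring
  have hH2 : ∀ s, 2 * s₀ ≤ s → (1 / 2 - 1 / p) * s ^ p ≤
      (1/2) * (modg f ξ η p m₀ s * s) - modG f ξ η p m₀ s := by
    intro s hs
    have hs0 : 0 < s := lt_of_lt_of_le (by positivity) hs
    rw [hHeq s hs0]
    have h1 := hAlow s hs0.le
    have h2 := hBlow s hs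
    have h3 : D ≤ s ^ p := by
      rw [hDdef]
      exact Real.rpow_le_rpow (by positivity) hs hp0.le
    have h4 : m₀ * ((1 / 2 - 1 / p) * s ^ p)
        ≤ m₀ * ((1/2) * (g2 s * s) - ∫ t in (0:ℝ)..s, g2 t) :=
      mul_le_mul_of_nonneg_left h2 hm₀.le
    have h5 : (1 / 2 - 1 / p) * s ^ p + M ≤ m₀ * ((1 / 2 - 1 / p) * s ^ p) := by
      rw [hm₀def]
      have hXnn : 0 ≤ 2 * M / ((1 / 2 - 1 / p) * D) :=
        div_nonneg (by linarith) (mul_pos hκ hD).le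
      have h6 : 2 * M / ((1 / 2 - 1 / p) * D) * ((1 / 2 - 1 / p) * D)
          ≤ 2 * M / ((1 / 2 - 1 / p) * D) * ((1 / 2 - 1 / p) * s ^ p) :=
        mul_le_mul_of_nonneg_left (mul_le_mul_of_nonneg_left h3 hκ.le) hXnn
      have h7 : 2 * M / ((1 / 2 - 1 / p) * D) * ((1 / 2 - 1 / p) * D) = 2 * M :=
        div_mul_cancel₀ (2 * M) (mul_pos hκ hD).ne'
      have h8 : (1 + 2 * M / ((1 / 2 - 1 / p) * D)) * ((1 / 2 - 1 / p) * s ^ p)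
          = (1 / 2 - 1 / p) * s ^ p
            + 2 * M / ((1 / 2 - 1 / p) * D) * ((1 / 2 - 1 / p) * s ^ p) := by ring
      rw [h8]
      linarith
    linarith
  have hHposSmall : ∀ s, 0 < s → s ≤ 2 * s₀ →
      0 < (1/2) * (modg f ξ η p m₀ s * s) - modG f ξ η p m₀ s := by
    intro s hs hs2
    rw [hHeq s hs]
    have h2 := hAeq s hs (by linarith)
    have h3 := (h21 s hs (by linarith)).2
    have h5 : 0 ≤ m₀ * ((1/2) * (g2 s * s) - ∫ t in (0:ℝ)..s, g2 t) :=
      mul_nonneg hm₀.le (hBnn s hs)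
    rw [h2]
    linarith
  have hF1cont : Continuous fun s => ∫ t in (0:ℝ)..s, g1 t :=
    intervalIntegral.continuous_primitive hg1i 0
  have hF2cont : Continuous fun s => ∫ t in (0:ℝ)..s, g2 t :=
    intervalIntegral.continuous_primitive hg2i 0
  have hHccont : Continuous fun s =>
      ((1/2) * (g1 s * s) - ∫ t in (0:ℝ)..s, g1 t)
        + m₀ * ((1/2) * (g2 s * s) - ∫ t in (0:ℝ)..s, g2 t) :=
    ((continuous_const.mul (hg1c.mul continuous_id)).sub hF1cont).add
      (continuous_const.mul
        ((continuous_const.mul (hg2c.mul continuous_id)).sub hF2cont))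
  refine ⟨m₀, hm₀, ?_, ?_⟩
  · intro τ hτ hτs
    have hτ2 : τ < 2 * s₀ := by linarith
    obtain ⟨x, hxmem, hxmin⟩ :=
      isCompact_Icc.exists_isMinOn (f := fun s =>
        ((1/2) * (g1 s * s) - ∫ t in (0:ℝ)..s, g1 t)
          + m₀ * ((1/2) * (g2 s * s) - ∫ t in (0:ℝ)..s, g2 t))
        ⟨τ, le_rfl, hτ2.le⟩ hHccont.continuousOn
    have hx0 : 0 < x := lt_of_lt_of_le hτ hxmem.1
    set ε : ℝ := ((1/2) * (g1 x * x) - ∫ t in (0:ℝ)..x, g1 t)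
        + m₀ * ((1/2) * (g2 x * x) - ∫ t in (0:ℝ)..x, g2 t) with hεdef
    have hε : 0 < ε := by
      rw [hεdef, ← hHeq x hx0]
      exact hHposSmall x hx0 hxmem.2
    refine ⟨min (ε / D) (1 / 2 - 1 / p), lt_min (div_pos hε hD) hκ, ?_⟩
    intro s hs
    have hs0 : 0 < s := lt_of_lt_of_le hτ hs
    have hspnn : 0 ≤ s ^ p := Real.rpow_nonneg hs0.le p
    rcases le_total s (2 * s₀) with h | h
    · have hεle : ε ≤ (1/2) * (modg f ξ η p m₀ s * s) - modG f ξ η p m₀ s := by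
        rw [hHeq s hs0]
        exact hxmin ⟨hs, h⟩
      have hsD : s ^ p ≤ D := by
        rw [hDdef]
        exact Real.rpow_le_rpow hs0.le h hp0.le
      calc min (ε / D) (1 / 2 - 1 / p) * s ^ p
          ≤ (ε / D) * s ^ p := mul_le_mul_of_nonneg_right (min_le_left _ _) hspnn
        _ ≤ (ε / D) * D := mul_le_mul_of_nonneg_left hsD (div_pos hε hD).le
        _ = ε := by field_simp
        _ ≤ _ := hεle
    · calc min (ε / D) (1 / 2 - 1 / p) * s ^ p
          ≤ (1 / 2 - 1 / p) * s ^ p := mul_le_mul_of_nonneg_right (min_le_right _ _) hspnn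
        _ ≤ _ := hH2 s h
  · intro s hs
    rcases le_total s (2 * s₀) with h | h
    · exact hHposSmall s hs h
    · have h1 := hH2 s h
      have h2 : 0 < (1 / 2 - 1 / p) * s ^ p :=
        mul_pos hκ (Real.rpow_pos_of_pos hs p)
      linarith
end
end

section
/- Assume (f1), (f2), (f3), (f4). Then there exist $m_0>0$ and a constant $\tilde c>0$ such that $\tilde c\, s^p\le G_{m_0}(s)$ for all $s\in[0,\infty)$. -/
open MeasureTheory Filter Topology Real Set

noncomputable section

/-- Lemma 2.1 (ii): under (f1)–(f4) there are `m₀ > 0` and `c̃ > 0`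
such that `c̃ s^p ≤ G_{m₀}(s)` for all `s ≥ 0`. -/
theorem statement7
    (N : ℕ) (hN : 1 ≤ N) (f : ℝ → ℝ) (p : ℝ)
    -- `p ∈ (2, 2^*)` from (f3)
    (hp : 2 < p) (hp' : 3 ≤ N → p < 2 * N / ((N : ℝ) - 2))
    -- (f1)
    (hf1 : Continuous f) (hf1' : ∀ s ≤ 0, f s = 0)
    -- (f2)
    (hf2 : Tendsto (fun s => f s / s) (𝓝[>] (0:ℝ)) (𝓝 0))
    -- (f3)
    (hf3 : ∃ c > 0, ∀ᶠ s in 𝓝[>] (0:ℝ), c * s ^ p ≤ ∫ t in (0:ℝ)..s, f t)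
    -- (f4)
    (hf4 : ∃ s₁ > 0, ∀ s, 0 < s → s ≤ s₁ →
      0 < (1/2) * (f s * s) - ∫ t in (0:ℝ)..s, f t)
    -- the scale `s₀` and constant `c₀` of (2.1)
    (s₀ c₀ : ℝ) (hs₀ : 0 < s₀) (hc₀ : 0 < c₀)
    (h21 : ∀ s, 0 < s → s ≤ 4 * s₀ →
      c₀ * s ^ p ≤ (∫ t in (0:ℝ)..s, f t) ∧
      0 < (1/2) * (f s * s) - ∫ t in (0:ℝ)..s, f t)
    -- the cut-off functions `ξ₁`, `η₁` of (2.3)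
    (ξ η : ℝ → ℝ)
    (hξ : ContDiff ℝ (⊤ : ℕ∞) ξ) (hξ1 : ∀ s ∈ Icc (0:ℝ) (3 * s₀), ξ s = 1)
    (hξ0 : ∀ s, 4 * s₀ ≤ s → ξ s = 0) (hξ' : ∀ s, 0 ≤ s → deriv ξ s ≤ 0)
    (hη : ContDiff ℝ (⊤ : ℕ∞) η) (hη0 : ∀ s ∈ Icc (0:ℝ) s₀, η s = 0)
    (hη1 : ∀ s, 2 * s₀ ≤ s → η s = 1) (hη' : ∀ s, 0 ≤ s → 0 ≤ deriv η s) :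
    ∃ m₀ > 0, ∃ ct > 0, ∀ s, 0 ≤ s →
      ct * s ^ p ≤ modG f ξ η p m₀ s := by

  have hp0 : (0:ℝ) < p := by linarith
  have hp1 : (0:ℝ) < p - 1 := by linarith
  -- positivity of f on (0, 4s₀]
  have hfpos : ∀ t : ℝ, 0 < t → t ≤ 4 * s₀ → 0 < f t := by
    intro t ht ht'
    obtain ⟨h1, h2⟩ := h21 t ht ht'
    have htp : 0 < c₀ * t ^ p := mul_pos hc₀ (Real.rpow_pos_of_pos ht p)
    nlinarith
  -- η is nonnegative on [0, ∞)
  have hηmono : MonotoneOn η (Ici (0:ℝ)) := by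
    apply monotoneOn_of_deriv_nonneg (convex_Ici 0) hη.continuous.continuousOn
    · intro x _
      exact (hη.differentiable (by simp) x).differentiableWithinAt
    · intro x hx
      rw [interior_Ici] at hx
      exact hη' x (le_of_lt hx)
  have hηnn : ∀ t : ℝ, 0 ≤ t → 0 ≤ η t := by
    intro t ht
    have h0 : η 0 = 0 := hη0 0 ⟨le_rfl, hs₀.le⟩
    have := hηmono (le_refl (0:ℝ)) ht ht
    rw [h0] at this; exact this
  -- ξ is nonnegative on [0, ∞)
  have hξanti : AntitoneOn ξ (Ici (0:ℝ)) := by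
    apply antitoneOn_of_deriv_nonpos (convex_Ici 0) hξ.continuous.continuousOn
    · intro x _
      exact (hξ.differentiable (by simp) x).differentiableWithinAt
    · intro x hx
      rw [interior_Ici] at hx
      exact hξ' x (le_of_lt hx)
  have hξnn : ∀ t : ℝ, 0 ≤ t → 0 ≤ ξ t := by
    intro t ht
    rcases le_or_gt (4 * s₀) t with h | h
    · rw [hξ0 t h]
    · have h4 : (0:ℝ) ≤ 4 * s₀ := by linarith
      have := hξanti ht h4 h.le
      rw [hξ0 (4 * s₀) le_rfl] at this; exact this
  -- ξ * f ≥ 0 on [0, ∞)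
  have hξf : ∀ t : ℝ, 0 ≤ t → 0 ≤ ξ t * f t := by
    intro t ht
    rcases eq_or_lt_of_le ht with h | h
    · rw [hf1' t (le_of_eq h.symm), mul_zero]
    · rcases le_or_gt t (4 * s₀) with h' | h'
      · exact mul_nonneg (hξnn t ht) (hfpos t h h').le
      · rw [hξ0 t h'.le, zero_mul]
  -- the continuous version of g
  set m := p * c₀ with hmdef
  have hm0 : 0 < m := mul_pos hp0 hc₀
  set h : ℝ → ℝ := fun t => ξ t * f t + m * η t * t ^ (p - 1) with hhdef
  have hrc : Continuous fun t : ℝ => t ^ (p - 1) := by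
    rw [continuous_iff_continuousAt]
    exact fun x => Real.continuousAt_rpow_const x _ (Or.inr hp1.le)
  have hcont : Continuous h :=
    ((hξ.continuous.mul hf1).add
      (((continuous_const.mul hη.continuous)).mul hrc))
  -- modG equals the integral of h on [0, s]
  have hG : ∀ s : ℝ, 0 ≤ s → modG f ξ η p m s = ∫ t in (0:ℝ)..s, h t := by
    intro s hs
    apply intervalIntegral.integral_congr
    intro t ht
    rw [Set.uIcc_of_le hs] at ht
    rcases eq_or_lt_of_le ht.1 with h0 | h0
    · simp only [modg, hhdef, ← h0]
      rw [if_neg (lt_irrefl 0), hf1' 0 le_rfl, hη0 0 ⟨le_rfl, hs₀.le⟩]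
      ring
    · simp only [modg, hhdef]
      rw [if_pos h0]
  -- lower bound F(s) ≤ ∫₀ˢ h for s ∈ [0, 2s₀]
  have hlow : ∀ s : ℝ, 0 < s → s ≤ 2 * s₀ → c₀ * s ^ p ≤ ∫ t in (0:ℝ)..s, h t := by
    intro s hs hs'
    have h1 : (∫ t in (0:ℝ)..s, f t) ≤ ∫ t in (0:ℝ)..s, h t := by
      apply intervalIntegral.integral_mono_on hs.le
        (hf1.intervalIntegrable 0 s) (hcont.intervalIntegrable 0 s)
      intro t ht
      have hξt : ξ t = 1 := hξ1 t ⟨ht.1, by linarith [ht.2]⟩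
      have : 0 ≤ m * η t * t ^ (p - 1) :=
        mul_nonneg (mul_nonneg hm0.le (hηnn t ht.1)) (Real.rpow_nonneg ht.1 _)
      simp only [hhdef, hξt, one_mul]
      linarith
    exact le_trans (h21 s hs (by linarith)).1 h1
  refine ⟨m, hm0, c₀, hc₀, ?_⟩
  intro s hs
  rcases eq_or_lt_of_le hs with h0 | h0
  · rw [modG, ← h0, intervalIntegral.integral_same, Real.zero_rpow (ne_of_gt hp0), mul_zero]
  rw [hG s hs]
  rcases le_or_gt s (2 * s₀) with hcase | hcase
  · exact hlow s h0 hcase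
  · -- split the integral at 2s₀
    have h2s : (0:ℝ) ≤ 2 * s₀ := by linarith
    have hsplit : (∫ t in (0:ℝ)..(2 * s₀), h t) + (∫ t in (2 * s₀)..s, h t)
        = ∫ t in (0:ℝ)..s, h t :=
      intervalIntegral.integral_add_adjacent_intervals
        (hcont.intervalIntegrable _ _) (hcont.intervalIntegrable _ _)
    have b1 : c₀ * (2 * s₀) ^ p ≤ ∫ t in (0:ℝ)..(2 * s₀), h t :=
      hlow (2 * s₀) (by linarith) le_rfl
    have b2 : (∫ t in (2 * s₀)..s, m * t ^ (p - 1)) ≤ ∫ t in (2 * s₀)..s, h t := by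
      apply intervalIntegral.integral_mono_on hcase.le
        ((continuous_const.mul hrc).intervalIntegrable _ _)
        (hcont.intervalIntegrable _ _)
      intro t ht
      have ht0 : (0:ℝ) ≤ t := le_trans h2s ht.1
      have hηt : η t = 1 := hη1 t ht.1
      have := hξf t ht0
      simp only [hhdef, hηt, mul_one, Pi.mul_apply, ← hmdef]
      linarith
    have b3 : (∫ t in (2 * s₀)..s, m * t ^ (p - 1))
        = c₀ * s ^ p - c₀ * (2 * s₀) ^ p := by
      rw [intervalIntegral.integral_const_mul, integral_rpow (Or.inl (by linarith))]
      have hpe : p - 1 + 1 = p := by ring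
      rw [hpe, hmdef]
      field_simp
    linarith
end
end

section
/- Assume (f1), (f2), (f3), (f4) and additionally (f6). Then there exists $m_0>0$ (large enough) such that the function $s\mapsto s^{-1}g_{m_0}(s)$ is nondecreasing on $(0,\infty)$. -/
open MeasureTheory Filter Topology Real Set

noncomputable section

set_option maxHeartbeats 1000000 in
/-- Lemma 2.1 (iv): under (f1)–(f4) and (f6) there is `m₀ > 0` (large)
such that `s ↦ g_{m₀}(s)/s` is nondecreasing on `(0,∞)`. -/
theorem statement9
    (N : ℕ) (hN : 1 ≤ N) (f : ℝ → ℝ) (p : ℝ)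
    -- `p ∈ (2, 2^*)` from (f3)
    (hp : 2 < p) (hp' : 3 ≤ N → p < 2 * N / ((N : ℝ) - 2))
    -- (f1)
    (hf1 : Continuous f) (hf1' : ∀ s ≤ 0, f s = 0)
    -- (f2)
    (hf2 : Tendsto (fun s => f s / s) (𝓝[>] (0:ℝ)) (𝓝 0))
    -- (f3)
    (hf3 : ∃ c > 0, ∀ᶠ s in 𝓝[>] (0:ℝ), c * s ^ p ≤ ∫ t in (0:ℝ)..s, f t)
    -- (f4)
    (hf4 : ∃ s₁ > 0, ∀ s, 0 < s → s ≤ s₁ →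
      0 < (1/2) * (f s * s) - ∫ t in (0:ℝ)..s, f t)
    -- the scale `s₀` and constant `c₀` of (2.1)
    (s₀ c₀ : ℝ) (hs₀ : 0 < s₀) (hc₀ : 0 < c₀)
    (h21 : ∀ s, 0 < s → s ≤ 4 * s₀ →
      c₀ * s ^ p ≤ (∫ t in (0:ℝ)..s, f t) ∧
      0 < (1/2) * (f s * s) - ∫ t in (0:ℝ)..s, f t)
    -- the cut-off functions `ξ₁`, `η₁` of (2.3)
    (ξ η : ℝ → ℝ)
    (hξ : ContDiff ℝ (⊤ : ℕ∞) ξ) (hξ1 : ∀ s ∈ Icc (0:ℝ) (3 * s₀), ξ s = 1)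
    (hξ0 : ∀ s, 4 * s₀ ≤ s → ξ s = 0) (hξ' : ∀ s, 0 ≤ s → deriv ξ s ≤ 0)
    (hη : ContDiff ℝ (⊤ : ℕ∞) η) (hη0 : ∀ s ∈ Icc (0:ℝ) s₀, η s = 0)
    (hη1 : ∀ s, 2 * s₀ ≤ s → η s = 1) (hη' : ∀ s, 0 ≤ s → 0 ≤ deriv η s)
    -- (f6), with `4 s₀ ≤ s₂`
    (s₂ : ℝ) (hs₂ : 0 < s₂) (hs₂' : 4 * s₀ ≤ s₂)
    (hf6 : ∀ s t, 0 < s → s ≤ t → t < s₂ → f s / s ≤ f t / t) :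
    ∃ m₀ > 0, ∀ s t : ℝ, 0 < s → s ≤ t →
      modg f ξ η p m₀ s / s ≤ modg f ξ η p m₀ t / t := by
  classical
  have h2s : (0:ℝ) < 2 * s₀ := by linarith
  have h4s : (0:ℝ) < 4 * s₀ := by linarith
  set φ : ℝ → ℝ := fun s => f s / s with hφdef
  have hφcont : ∀ x : ℝ, 0 < x → ContinuousAt φ x := fun x hx =>
    (hf1.continuousAt).div continuousAt_id (ne_of_gt hx)
  -- monotonicity of φ up to s₂ (inclusive)
  have phi_mono : ∀ s t, 0 < s → s ≤ t → t ≤ s₂ → φ s ≤ φ t := by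
    intro s t hs hst hts2
    rcases eq_or_lt_of_le hst with rfl | hlt
    · exact le_rfl
    rcases lt_or_eq_of_le hts2 with h | h
    · exact hf6 s t hs hst h
    · have ht0 : 0 < t := lt_trans hs hlt
      have htend : Tendsto φ (𝓝[<] t) (𝓝 (φ t)) :=
        ((hφcont t ht0).tendsto).mono_left nhdsWithin_le_nhds
      refine ge_of_tendsto htend ?_
      filter_upwards [Ioo_mem_nhdsLT_of_mem (⟨hlt, le_rfl⟩ : t ∈ Ioc s t)] with u hu
      exact hf6 s u hs hu.1.le (h ▸ hu.2)
  have phi_nonneg : ∀ s, 0 < s → s ≤ s₂ → 0 ≤ φ s := by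
    intro s hs hss2
    refine le_of_tendsto hf2 ?_
    filter_upwards [Ioo_mem_nhdsGT_of_mem (⟨le_rfl, hs⟩ : (0:ℝ) ∈ Ico (0:ℝ) s)] with u hu
    exact phi_mono u s hu.1 hu.2.le hss2
  -- monotonicity of ξ and η
  have hξdiff : Differentiable ℝ ξ := hξ.differentiable (by simp)
  have hηdiff : Differentiable ℝ η := hη.differentiable (by simp)
  have hξanti : AntitoneOn ξ (Ici 0) := by
    refine antitoneOn_of_deriv_nonpos (convex_Ici 0) hξ.continuous.continuousOn
      hξdiff.differentiableOn ?_
    intro x hx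
    rw [interior_Ici] at hx
    exact hξ' x (le_of_lt hx)
  have hηmono : MonotoneOn η (Ici 0) := by
    refine monotoneOn_of_deriv_nonneg (convex_Ici 0) hη.continuous.continuousOn
      hηdiff.differentiableOn ?_
    intro x hx
    rw [interior_Ici] at hx
    exact hη' x (le_of_lt hx)
  have hξnonneg : ∀ s, 0 ≤ s → 0 ≤ ξ s := by
    intro s hs
    rcases le_or_gt s (4 * s₀) with h | h
    · have := hξanti (mem_Ici.2 hs) (mem_Ici.2 h4s.le) h
      rw [hξ0 (4 * s₀) le_rfl] at this
      exact this
    · rw [hξ0 s h.le]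
  have hηnonneg : ∀ s, 0 ≤ s → 0 ≤ η s := by
    intro s hs
    rcases le_or_gt s s₀ with h | h
    · rw [hη0 s ⟨hs, h⟩]
    · have := hηmono (mem_Ici.2 hs₀.le) (mem_Ici.2 hs) h.le
      rw [hη0 s₀ ⟨hs₀.le, le_rfl⟩] at this
      exact this
  -- Lipschitz bound for ξ on the compact interval
  have hξderivcont : Continuous fun x => |deriv ξ x| := (hξ.continuous_deriv (by simp)).abs
  obtain ⟨a, -, hLmax⟩ := isCompact_Icc.exists_isMaxOn
    (nonempty_Icc.2 (by linarith : 2 * s₀ ≤ 4 * s₀)) hξderivcont.continuousOn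
  set L : ℝ := |deriv ξ a| with hLdef
  have hL0 : 0 ≤ L := abs_nonneg _
  set C : ℝ := φ (4 * s₀) with hCdef
  have hC0 : 0 ≤ C := phi_nonneg _ h4s hs₂'
  set κ : ℝ := (p - 2) * min ((2 * s₀) ^ (p - 3)) ((4 * s₀) ^ (p - 3)) with hκdef
  have hκ : 0 < κ := by
    apply mul_pos (by linarith)
    exact lt_min (rpow_pos_of_pos h2s _) (rpow_pos_of_pos h4s _)
  set m₀ : ℝ := L * C / κ + 1 with hm₀def
  have hm₀ : 0 < m₀ := by positivity
  have hmκ : L * C ≤ m₀ * κ := by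
    have h1 : m₀ * κ = L * C + κ := by
      rw [hm₀def, add_mul, div_mul_cancel₀ _ hκ.ne', one_mul]
    linarith
  refine ⟨m₀, hm₀, ?_⟩
  set H : ℝ → ℝ := fun s => ξ s * φ s + m₀ * η s * s ^ (p - 2) with hHdef
  have hmodg_div : ∀ s, 0 < s → modg f ξ η p m₀ s / s = H s := by
    intro s hs
    simp only [modg, if_pos hs, hHdef, hφdef]
    rw [show p - 1 = (p - 2) + 1 by ring, Real.rpow_add_one (ne_of_gt hs)]
    field_simp
  -- region A: (0, 2 s₀]
  have regA : ∀ s t, 0 < s → s ≤ t → t ≤ 2 * s₀ → H s ≤ H t := by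
    intro s t hs hst ht
    have ht0 : 0 < t := lt_of_lt_of_le hs hst
    have hξs : ξ s = 1 := hξ1 s ⟨hs.le, by linarith⟩
    have hξt : ξ t = 1 := hξ1 t ⟨ht0.le, by linarith⟩
    have hφ : φ s ≤ φ t := phi_mono s t hs hst (by linarith)
    have hpow : s ^ (p - 2) ≤ t ^ (p - 2) := rpow_le_rpow hs.le hst (by linarith)
    have hηst : η s ≤ η t := hηmono (mem_Ici.2 hs.le) (mem_Ici.2 ht0.le) hst
    have h1 : m₀ * η s * s ^ (p - 2) ≤ m₀ * η t * t ^ (p - 2) := by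
      apply mul_le_mul (mul_le_mul_of_nonneg_left hηst hm₀.le)
        hpow (rpow_nonneg hs.le _) (mul_nonneg hm₀.le (hηnonneg t ht0.le))
    simp only [hHdef, hξs, hξt, one_mul]
    linarith
  -- region B: [2 s₀, 4 s₀]
  have regB : ∀ s t, 2 * s₀ ≤ s → s ≤ t → t ≤ 4 * s₀ → H s ≤ H t := by
    intro s t hs2 hst ht4
    rcases eq_or_lt_of_le hst with rfl | hlt
    · exact le_rfl
    have hs0 : 0 < s := lt_of_lt_of_le h2s hs2
    have ht0 : 0 < t := lt_trans hs0 hlt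
    have hηs : η s = 1 := hη1 s hs2
    have hηt : η t = 1 := hη1 t (le_trans hs2 hst)
    have hφst : φ s ≤ φ t := phi_mono s t hs0 hst (by linarith)
    have hφsC : φ s ≤ C := phi_mono s (4 * s₀) hs0 (by linarith) hs₂'
    have hφs0 : 0 ≤ φ s := phi_nonneg s hs0 (by linarith)
    have hξt0 : 0 ≤ ξ t := hξnonneg t ht0.le
    -- MVT for ξ
    obtain ⟨c, hc, hceq⟩ := exists_hasDerivAt_eq_slope ξ (deriv ξ) hlt
      hξ.continuous.continuousOn (fun x _ => (hξdiff x).hasDerivAt)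
    have hts : t - s ≠ 0 := sub_ne_zero.2 hlt.ne'
    have hcL : |deriv ξ c| ≤ L := hLmax ⟨by linarith [hc.1], by linarith [hc.2]⟩
    have hξdiff1 : -(L * (t - s)) ≤ ξ t - ξ s := by
      have h1 : ξ t - ξ s = deriv ξ c * (t - s) := by
        rw [hceq, div_mul_cancel₀ _ hts]
      have h2 : -L ≤ deriv ξ c := by
        have := neg_abs_le (deriv ξ c)
        linarith
      nlinarith [sub_pos.2 hlt]
    -- MVT for rpow
    obtain ⟨d, hd, hdeq⟩ := exists_hasDerivAt_eq_slope (fun x => x ^ (p - 2))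
      (fun x => (p - 2) * x ^ (p - 3)) hlt
      (fun x hx => (Real.continuousAt_rpow_const x (p - 2)
        (Or.inl (ne_of_gt (lt_of_lt_of_le hs0 hx.1)))).continuousWithinAt)
      (fun x hx => by
        have := Real.hasDerivAt_rpow_const
          (x := x) (p := p - 2) (Or.inl (ne_of_gt (lt_trans hs0 hx.1)))
        rw [show p - 3 = p - 2 - 1 from by ring]
        exact this)
    have hd0 : 0 < d := lt_trans hs0 hd.1
    have hdmin : min ((2 * s₀) ^ (p - 3)) ((4 * s₀) ^ (p - 3)) ≤ d ^ (p - 3) := by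
      rcases le_or_gt 0 (p - 3) with h | h
      · exact le_trans (min_le_left _ _) (rpow_le_rpow h2s.le (by linarith [hd.1]) h)
      · exact le_trans (min_le_right _ _)
          (rpow_le_rpow_of_nonpos hd0 (by linarith [hd.2]) h.le)
    have hpoweq : t ^ (p - 2) - s ^ (p - 2) = (p - 2) * d ^ (p - 3) * (t - s) := by
      rw [hdeq, div_mul_cancel₀ _ hts]
    have hpowge : κ * (t - s) ≤ t ^ (p - 2) - s ^ (p - 2) := by
      rw [hpoweq, hκdef]
      apply mul_le_mul_of_nonneg_right _ (by linarith)
      exact mul_le_mul_of_nonneg_left hdmin (by linarith)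
    have key1 : 0 ≤ ξ t * (φ t - φ s) := mul_nonneg hξt0 (by linarith)
    have key2 : -(L * (t - s)) * φ s ≤ (ξ t - ξ s) * φ s :=
      mul_le_mul_of_nonneg_right hξdiff1 hφs0
    have key3 : L * (t - s) * φ s ≤ L * (t - s) * C :=
      mul_le_mul_of_nonneg_left hφsC (mul_nonneg hL0 (by linarith))
    have key4 : L * C * (t - s) ≤ m₀ * κ * (t - s) :=
      mul_le_mul_of_nonneg_right hmκ (by linarith)
    have key5 : m₀ * κ * (t - s) ≤ m₀ * (t ^ (p - 2) - s ^ (p - 2)) := by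
      rw [mul_assoc]
      exact mul_le_mul_of_nonneg_left hpowge hm₀.le
    simp only [hHdef, hηs, hηt, mul_one]
    nlinarith [key1, key2, key3, key4, key5]
  -- region C: [4 s₀, ∞)
  have regC : ∀ s t, 4 * s₀ ≤ s → s ≤ t → H s ≤ H t := by
    intro s t hs4 hst
    have hs0 : 0 < s := lt_of_lt_of_le h4s hs4
    have hξs : ξ s = 0 := hξ0 s hs4
    have hξt : ξ t = 0 := hξ0 t (le_trans hs4 hst)
    have hηs : η s = 1 := hη1 s (by linarith)
    have hηt : η t = 1 := hη1 t (by linarith)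
    have hpow : s ^ (p - 2) ≤ t ^ (p - 2) := rpow_le_rpow hs0.le hst (by linarith)
    simp only [hHdef, hξs, hξt, hηs, hηt, zero_mul, mul_one, zero_add]
    exact mul_le_mul_of_nonneg_left hpow hm₀.le
  -- assemble
  intro s t hs hst
  have ht0 : 0 < t := lt_of_lt_of_le hs hst
  rw [hmodg_div s hs, hmodg_div t ht0]
  rcases le_or_gt t (2 * s₀) with h1 | h1
  · exact regA s t hs hst h1
  rcases le_or_gt t (4 * s₀) with h2 | h2
  · rcases le_or_gt (2 * s₀) s with h3 | h3
    · exact regB s t h3 hst h2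
    · exact le_trans (regA s (2 * s₀) hs h3.le le_rfl) (regB (2 * s₀) t le_rfl h1.le h2)
  · rcases le_or_gt (4 * s₀) s with h3 | h3
    · exact regC s t h3 hst
    rcases le_or_gt (2 * s₀) s with h4 | h4
    · exact le_trans (regB s (4 * s₀) h4 h3.le le_rfl) (regC (4 * s₀) t le_rfl h2.le)
    · exact le_trans (regA s (2 * s₀) hs h4.le le_rfl)
        (le_trans (regB (2 * s₀) (4 * s₀) le_rfl (by linarith) le_rfl)
          (regC (4 * s₀) t le_rfl h2.le))
end
end

section
/- Let (V1), (V2) and (f1)–(f4) hold. Then there exists $M>0$ such that the mountain pass level of $I_\lambda$ satisfies $c_\lambda\le M\,\lambda^{-2/(p-2)}$ for all $\lambda>0$. -/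
open MeasureTheory Filter Topology Real Set

noncomputable section

abbrev Euc (N : ℕ) := EuclideanSpace ℝ (Fin N)

/-- A test function: smooth with compact support. -/
def IsTestFn {N : ℕ} (φ : Euc N → ℝ) : Prop :=
  ContDiff ℝ (⊤ : ℕ∞) φ ∧ HasCompactSupport φ

/-- `g` is the (distributional) gradient of `u`. -/
def IsWeakGrad {N : ℕ} (u : Euc N → ℝ) (g : Euc N → Euc N) : Prop :=
  ∀ φ : Euc N → ℝ, IsTestFn φ →
    ∫ x, u x • gradient φ x = - ∫ x, φ x • g x

/-- The energy functional
`I(u) = ½ ∫ (|∇u|² + V u²) - λ ∫ G(u)` evaluated on a pair `(u, ∇u)`. -/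
def IfunR {N : ℕ} (V : Euc N → ℝ) (lam : ℝ) (G : ℝ → ℝ)
    (u : Euc N → ℝ) (du : Euc N → Euc N) : ℝ :=
  (1/2) * (∫ x, (‖du x‖ ^ 2 + V x * (u x) ^ 2)) - lam * ∫ x, G (u x)

/-- The `H¹`-norm of a pair `(u, ∇u)`. -/
def H1normR {N : ℕ} (u : Euc N → ℝ) (du : Euc N → Euc N) : ℝ :=
  Real.sqrt ((eLpNorm u 2 volume).toReal ^ 2 + (eLpNorm du 2 volume).toReal ^ 2)

/-- An element of `H¹(ℝ^N)`: a function together with its weak gradient, both in `L²`. -/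
structure H1 (N : ℕ) where
  u : Euc N → ℝ
  du : Euc N → Euc N
  mem_u : MemLp u 2 (volume : Measure (Euc N))
  mem_du : MemLp du 2 (volume : Measure (Euc N))
  weakGrad : IsWeakGrad u du

def H1.zero (N : ℕ) : H1 N :=
  ⟨0, 0, MemLp.zero, MemLp.zero, by intro φ hφ; simp⟩

def H1.norm {N : ℕ} (a : H1 N) : ℝ := H1normR a.u a.du

def H1.dist {N : ℕ} (a b : H1 N) : ℝ :=
  Real.sqrt ((eLpNorm (fun x => a.u x - b.u x) 2 volume).toReal ^ 2
    + (eLpNorm (fun x => a.du x - b.du x) 2 volume).toReal ^ 2)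

def Ifun {N : ℕ} (V : Euc N → ℝ) (lam : ℝ) (G : ℝ → ℝ) (v : H1 N) : ℝ :=
  IfunR V lam G v.u v.du

/-- Continuity of a path in `H¹` (with respect to the `H¹`-distance, on `[0,1]`). -/
def H1PathCts {N : ℕ} (γ : ℝ → H1 N) : Prop :=
  ∀ t ∈ Icc (0:ℝ) 1, ∀ ε > 0, ∃ δ > 0, ∀ s ∈ Icc (0:ℝ) 1, |s - t| < δ →
    H1.dist (γ s) (γ t) < ε

/-- The admissible mountain pass paths for `I_λ`. -/
def MPpaths {N : ℕ} (V : Euc N → ℝ) (lam : ℝ) (G : ℝ → ℝ) : Set (ℝ → H1 N) :=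
  {γ | H1PathCts γ ∧ γ 0 = H1.zero N ∧ Ifun V lam G (γ 1) < 0}

/-- The mountain pass level `c_λ` of `I_λ`. -/
def MPlevel {N : ℕ} (V : Euc N → ℝ) (lam : ℝ) (G : ℝ → ℝ) : ℝ :=
  sInf {c | ∃ γ ∈ MPpaths V lam G, c = sSup ((fun t => Ifun V lam G (γ t)) '' Icc (0:ℝ) 1)}

/-- The Fréchet derivative pairing `I_λ'(v) w`. -/
def Ider {N : ℕ} (V : Euc N → ℝ) (lam : ℝ) (g : ℝ → ℝ) (v w : H1 N) : ℝ :=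
  (∫ x, ((inner ℝ (v.du x) (w.du x) : ℝ) + V x * v.u x * w.u x))
    - lam * ∫ x, g (v.u x) * w.u x

/-- The norm of `I_λ'(v)` in the dual space `(H¹(ℝ^N))^*`. -/
def IderNorm {N : ℕ} (V : Euc N → ℝ) (lam : ℝ) (g : ℝ → ℝ) (v : H1 N) : ℝ :=
  sSup {r | ∃ w : H1 N, H1.norm w ≤ 1 ∧ r = |Ider V lam g v w|}


section Aux

open MeasureTheory Filter Topology Real Set

lemma modg_continuous (f ξ η : ℝ → ℝ) (p m : ℝ) (hp : 2 < p)
    (hf : Continuous f) (hf0 : f 0 = 0) (hξ : Continuous ξ) (hη : Continuous η)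
    (hη0 : η 0 = 0) : Continuous (modg f ξ η p m) := by
  have h1 : Continuous fun s : ℝ => ξ s * f s + m * η s * s ^ (p - 1) := by
    refine ((hξ.mul hf).add (((continuous_const.mul hη)).mul ?_))
    exact continuous_id.rpow_const (fun x => Or.inr (by linarith))
  have heq : modg f ξ η p m = fun s => if s ≤ 0 then 0 else ξ s * f s + m * η s * s ^ (p - 1) := by
    funext s
    by_cases hs : 0 < s
    · rw [modg, if_pos hs, if_neg (not_le.2 hs)]
    · rw [modg, if_neg hs, if_pos (not_lt.1 hs)]
  rw [heq]
  refine Continuous.if_le continuous_const h1 continuous_id continuous_const ?_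
  intro s hs
  subst hs
  simp [hf0, hη0]

lemma modG_continuous (f ξ η : ℝ → ℝ) (p m : ℝ) (hp : 2 < p)
    (hf : Continuous f) (hf0 : f 0 = 0) (hξ : Continuous ξ) (hη : Continuous η)
    (hη0 : η 0 = 0) : Continuous (modG f ξ η p m) :=
  intervalIntegral.continuous_primitive
    (fun a b => (modg_continuous f ξ η p m hp hf hf0 hξ hη hη0).intervalIntegrable a b) 0

lemma keyineq {a d p : ℝ} (ha : 0 ≤ a) (hd : 0 < d) (hp : 2 < p) {s : ℝ} (hs : 0 ≤ s) :
    a * s ^ 2 - d * s ^ p ≤ a * (a / d) ^ (2 / (p - 2)) := by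
  have hR : 0 ≤ a * (a / d) ^ (2 / (p - 2)) :=
    mul_nonneg ha (Real.rpow_nonneg (div_nonneg ha hd.le) _)
  by_cases hs0 : s = 0
  · subst hs0
    have : (0:ℝ) ^ p = 0 := Real.zero_rpow (by positivity)
    simp [this]
    positivity
  have hspos : 0 < s := hs.lt_of_ne' hs0
  rcases le_or_gt (a / d) (s ^ (p - 2)) with h | h
  · have h1 : a ≤ d * s ^ (p - 2) := by
      rw [mul_comm]; exact (div_le_iff₀ hd).mp h
    have h2 : d * s ^ p = d * s ^ (p - 2) * s ^ 2 := by
      rw [mul_assoc, ← Real.rpow_natCast s 2, ← Real.rpow_add hspos]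
      norm_num
    nlinarith [mul_le_mul_of_nonneg_right h1 (sq_nonneg s)]
  · have h2 : s ^ (2:ℝ) ≤ (a / d) ^ (2 / (p - 2)) := by
      have hsp : s ^ (2:ℝ) = (s ^ (p - 2)) ^ (2 / (p - 2)) := by
        have hne : p - 2 ≠ 0 := by linarith
        rw [← Real.rpow_mul hs]
        congr 1
        field_simp
      rw [hsp]
      have hpos : (0:ℝ) < p - 2 := by linarith
      exact Real.rpow_le_rpow (Real.rpow_nonneg hs _) h.le (by positivity)
    have h2' : s ^ 2 ≤ (a / d) ^ (2 / (p - 2)) := by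
      rw [show ((2:ℝ) : ℝ) = ((2:ℕ) : ℝ) by norm_num, Real.rpow_natCast] at h2
      exact h2
    have h4 : 0 ≤ d * s ^ p := mul_nonneg hd.le (Real.rpow_nonneg hs _)
    nlinarith [mul_le_mul_of_nonneg_left h2' ha]

lemma H1ext {N : ℕ} {a b : H1 N} (hu : a.u = b.u) (hdu : a.du = b.du) : a = b := by
  cases a; cases b
  simp only at hu hdu
  subst hu; subst hdu
  rfl

lemma hcs_comp_smul {N : ℕ} {a : Euc N → ℝ} {g : Euc N → Euc N}
    (ha : HasCompactSupport a) : HasCompactSupport (fun x => a x • g x) := by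
  apply HasCompactSupport.intro ha
  intro x hx
  have : a x = 0 := image_eq_zero_of_notMem_tsupport hx
  simp [this]

lemma hcs_mul_right {N : ℕ} {a b : Euc N → ℝ}
    (ha : HasCompactSupport a) : HasCompactSupport (fun x => a x * b x) := by
  apply HasCompactSupport.intro ha
  intro x hx
  have : a x = 0 := image_eq_zero_of_notMem_tsupport hx
  simp [this]

lemma hcs_mul_left {N : ℕ} {a b : Euc N → ℝ}
    (hb : HasCompactSupport b) : HasCompactSupport (fun x => a x * b x) := by
  apply HasCompactSupport.intro hb
  intro x hx
  have : b x = 0 := image_eq_zero_of_notMem_tsupport hx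
  simp [this]

/-- Scalar multiplication on `H1`. -/
def H1.smulH {N : ℕ} (s : ℝ) (v : H1 N) : H1 N where
  u := fun x => s * v.u x
  du := s • v.du
  mem_u := v.mem_u.const_mul s
  mem_du := v.mem_du.const_smul s
  weakGrad := by
    intro φ hφ
    have h := v.weakGrad φ hφ
    calc ∫ x, (s * v.u x) • gradient φ x
        = ∫ x, s • (v.u x • gradient φ x) := by simp only [mul_smul]
      _ = s • ∫ x, v.u x • gradient φ x := integral_smul s _
      _ = s • (- ∫ x, φ x • v.du x) := by rw [h]
      _ = - ∫ x, φ x • (s • v.du) x := by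
          rw [smul_neg, ← integral_smul]
          have heq : (fun x => s • (φ x • v.du x)) = fun x => φ x • (s • v.du) x := by
            funext x
            simp only [Pi.smul_apply]
            rw [smul_comm]
          rw [heq]

end Aux


lemma gradient_continuous_of {N : ℕ} {ψ : Euc N → ℝ} (h : Continuous (fderiv ℝ ψ)) :
    Continuous (gradient ψ) :=
  (LinearIsometryEquiv.continuous _).comp h

lemma gradient_hasCompactSupport {N : ℕ} {ψ : Euc N → ℝ} (h : HasCompactSupport ψ) :
    HasCompactSupport (gradient ψ) := by
  have h1 := h.fderiv (𝕜 := ℝ)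
  exact h1.comp_left (g := (InnerProductSpace.toDual ℝ (Euc N)).symm) (map_zero _)

lemma gradient_apply_single {N : ℕ} (ψ : Euc N → ℝ) (x : Euc N) (i : Fin N) :
    gradient ψ x i = fderiv ℝ ψ x (EuclideanSpace.single i 1) := by
  have h1 : (inner ℝ (gradient ψ x) (EuclideanSpace.single i (1:ℝ)) : ℝ)
      = fderiv ℝ ψ x (EuclideanSpace.single i 1) := InnerProductSpace.toDual_symm_apply
  rw [EuclideanSpace.inner_single_right] at h1
  simpa using h1

lemma integral_euc_apply {N : ℕ} {f : Euc N → Euc N} (hf : Integrable f volume) (i : Fin N) :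
    (∫ x, f x) i = ∫ x, f x i := by
  have := (EuclideanSpace.proj (𝕜 := ℝ) i).integral_comp_comm hf
  simpa using this.symm

lemma isWeakGrad_gradient {N : ℕ} {W : Euc N → ℝ} (hW : ContDiff ℝ 2 W)
    (hWs : HasCompactSupport W) : IsWeakGrad W (gradient W) := by
  intro φ hφ
  obtain ⟨hφsm, hφs⟩ := hφ
  have hWc : Continuous W := hW.continuous
  have hφc : Continuous φ := hφsm.continuous
  have hWd : Differentiable ℝ W := hW.differentiable (by norm_num)
  have hφd : Differentiable ℝ φ := hφsm.differentiable (by simp)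
  have hWf : Continuous (fderiv ℝ W) := hW.continuous_fderiv (by norm_num)
  have hφf : Continuous (fderiv ℝ φ) := hφsm.continuous_fderiv (by simp)
  have hgφc : Continuous (gradient φ) := gradient_continuous_of hφf
  have hgWc : Continuous (gradient W) := gradient_continuous_of hWf
  have hint1 : Integrable (fun x => W x • gradient φ x) volume :=
    (hWc.smul hgφc).integrable_of_hasCompactSupport (hcs_comp_smul hWs)
  have hint2 : Integrable (fun x => φ x • gradient W x) volume :=
    (hφc.smul hgWc).integrable_of_hasCompactSupport (hcs_comp_smul hφs)
  ext i
  set v : Euc N := EuclideanSpace.single i 1 with hv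
  have hWfv : Continuous fun x => fderiv ℝ W x v := hWf.clm_apply continuous_const
  have hφfv : Continuous fun x => fderiv ℝ φ x v := hφf.clm_apply continuous_const
  have hint3 : Integrable (fun x => fderiv ℝ W x v * φ x) volume :=
    (hWfv.mul hφc).integrable_of_hasCompactSupport (hcs_mul_left hφs)
  have hint4 : Integrable (fun x => W x * fderiv ℝ φ x v) volume :=
    (hWc.mul hφfv).integrable_of_hasCompactSupport (hcs_mul_right hWs)
  have hint5 : Integrable (fun x => W x * φ x) volume :=
    (hWc.mul hφc).integrable_of_hasCompactSupport (hcs_mul_right hWs)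
  have hkey := integral_mul_fderiv_eq_neg_fderiv_mul_of_integrable (μ := volume)
    (f := W) (g := φ) (v := v) hint3 hint4 hint5 (fun x _ => hWd x) (fun x _ => hφd x)
  have hLHS : (∫ x, W x • gradient φ x) i = ∫ x, W x * gradient φ x i := by
    rw [integral_euc_apply hint1]
    rfl
  have hRHS : (∫ x, φ x • gradient W x) i = ∫ x, φ x * gradient W x i := by
    rw [integral_euc_apply hint2]
    rfl
  have hneg : (-∫ x, φ x • gradient W x) i = -((∫ x, φ x • gradient W x) i) := rfl
  rw [hneg, hLHS, hRHS]
  calc ∫ x, W x * gradient φ x i = ∫ x, W x * fderiv ℝ φ x v := by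
        simp_rw [gradient_apply_single]
        rfl
    _ = - ∫ x, fderiv ℝ W x v * φ x := hkey
    _ = - ∫ x, φ x * gradient W x i := by
        have heq : (fun x => fderiv ℝ W x v * φ x) = fun x => φ x * gradient W x i := by
          funext x
          rw [gradient_apply_single, mul_comm, hv]
        rw [heq]


set_option maxHeartbeats 2000000 in
/-- Lemma 3.5: under (V1), (V2) and (f1)–(f4), there is `M > 0` such
that the mountain pass level satisfies `c_λ ≤ M λ^{-2/(p-2)}` for all `λ > 0`. -/
theorem statement13
    (N : ℕ) (hN : 1 ≤ N) (V : Euc N → ℝ) (f : ℝ → ℝ) (Vinf : ℝ) (p : ℝ)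
    (hp : 2 < p) (hp' : 3 ≤ N → p < 2 * N / ((N : ℝ) - 2))
    -- (V1)
    (hV1 : Continuous V) (hV1' : ∃ V₀ > 0, ∀ x, V₀ ≤ V x)
    -- (V2)
    (hVinf : 0 < Vinf) (hV2 : Tendsto V (cocompact (Euc N)) (𝓝 Vinf))
    -- (f1)
    (hf1 : Continuous f) (hf1' : ∀ s ≤ 0, f s = 0)
    -- (f2)
    (hf2 : Tendsto (fun s => f s / s) (𝓝[>] (0:ℝ)) (𝓝 0))
    -- (f3)
    (hf3 : ∃ c > 0, ∀ᶠ s in 𝓝[>] (0:ℝ), c * s ^ p ≤ ∫ t in (0:ℝ)..s, f t)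
    -- (f4)
    (hf4 : ∃ s₁ > 0, ∀ s, 0 < s → s ≤ s₁ →
      0 < (1/2) * (f s * s) - ∫ t in (0:ℝ)..s, f t)
    -- the scale `s₀` and constant `c₀` of (2.1)
    (s₀ c₀ : ℝ) (hs₀ : 0 < s₀) (hc₀ : 0 < c₀)
    (h21 : ∀ s, 0 < s → s ≤ 4 * s₀ →
      c₀ * s ^ p ≤ (∫ t in (0:ℝ)..s, f t) ∧
      0 < (1/2) * (f s * s) - ∫ t in (0:ℝ)..s, f t)
    -- the cut-off functions of (2.3)
    (ξ η : ℝ → ℝ)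
    (hξ : ContDiff ℝ (⊤ : ℕ∞) ξ) (hξ1 : ∀ s ∈ Icc (0:ℝ) (3 * s₀), ξ s = 1)
    (hξ0 : ∀ s, 4 * s₀ ≤ s → ξ s = 0) (hξ' : ∀ s, 0 ≤ s → deriv ξ s ≤ 0)
    (hη : ContDiff ℝ (⊤ : ℕ∞) η) (hη0 : ∀ s ∈ Icc (0:ℝ) s₀, η s = 0)
    (hη1 : ∀ s, 2 * s₀ ≤ s → η s = 1) (hη' : ∀ s, 0 ≤ s → 0 ≤ deriv η s)
    -- `m₀` as provided by Lemma 2.1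
    (m₀ : ℝ) (hm₀ : 0 < m₀)
    (hm₁ : ∀ τ, 0 < τ → τ < s₀ → ∃ cτ > 0, ∀ s, τ ≤ s →
      cτ * s ^ p ≤ (1/2) * (modg f ξ η p m₀ s * s) - modG f ξ η p m₀ s)
    (hm₂ : ∀ s, 0 < s → 0 < (1/2) * (modg f ξ η p m₀ s * s) - modG f ξ η p m₀ s)
    (hm₃ : ∃ ct > 0, ∀ s, 0 ≤ s → ct * s ^ p ≤ modG f ξ η p m₀ s) :
    ∃ M > 0, ∀ lam > 0,
      MPlevel V lam (modG f ξ η p m₀) ≤ M * lam ^ (-(2:ℝ) / (p - 2)) := by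
  classical
  obtain ⟨V₀, hV₀, hV₀le⟩ := hV1'
  obtain ⟨ct, hct, hGlow⟩ := hm₃
  set G := modG f ξ η p m₀ with hGdef
  have hf0 : f 0 = 0 := hf1' 0 le_rfl
  have hη00 : η 0 = 0 := hη0 0 ⟨le_rfl, by positivity⟩
  have hGcont : Continuous G :=
    modG_continuous f ξ η p m₀ hp hf1 hf0 hξ.continuous hη.continuous hη00
  have hG0 : G 0 = 0 := intervalIntegral.integral_same
  -- the bump function
  let b : ContDiffBump (0 : Euc N) := ⟨1, 2, one_pos, one_lt_two⟩
  set W : Euc N → ℝ := fun x => b x with hWdef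
  have hWsm : ContDiff ℝ 2 W := by
    have := b.contDiff (n := 2)
    exact_mod_cast this
  have hWcont : Continuous W := hWsm.continuous
  have hWsupp : HasCompactSupport W := b.hasCompactSupport
  have hWnn : ∀ x, 0 ≤ W x := fun x => b.nonneg
  set dW := gradient W with hdWdef
  have hdWcont : Continuous dW := gradient_continuous_of (hWsm.continuous_fderiv (by norm_num))
  have hdWsupp : HasCompactSupport dW := gradient_hasCompactSupport hWsupp
  let v₀ : H1 N := ⟨W, dW, hWcont.memLp_of_hasCompactSupport hWsupp,
    hdWcont.memLp_of_hasCompactSupport hdWsupp, isWeakGrad_gradient hWsm hWsupp⟩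
  have hv₀u : v₀.u = W := rfl
  have hv₀du : v₀.du = dW := rfl
  have hsu : ∀ s : ℝ, (H1.smulH s v₀).u = fun x => s * W x := fun s => rfl
  have hsdu : ∀ s : ℝ, (H1.smulH s v₀).du = s • dW := fun s => rfl
  -- constants A and B
  set A : ℝ := ∫ x, (‖dW x‖ ^ 2 + V x * W x ^ 2) with hAdef
  have hA0 : 0 ≤ A := integral_nonneg fun x =>
    add_nonneg (sq_nonneg _) (mul_nonneg (le_trans hV₀.le (hV₀le x)) (sq_nonneg _))
  have hWp_cont : Continuous fun x => W x ^ p := hWcont.rpow_const fun x => Or.inr (by positivity)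
  have hWp_supp : HasCompactSupport fun x => W x ^ p := by
    have := hWsupp.comp_left (g := fun y : ℝ => y ^ p)
      (by simp [Real.zero_rpow (show p ≠ 0 by positivity)])
    exact this
  have hWp_int : Integrable (fun x => W x ^ p) volume :=
    hWp_cont.integrable_of_hasCompactSupport hWp_supp
  set B : ℝ := ∫ x, W x ^ p with hBdef
  have hB : 0 < B := by
    have h1 : ∫ x in Metric.ball (0 : Euc N) 1, W x ^ p
        = ∫ _x in Metric.ball (0 : Euc N) 1, (1:ℝ) := by
      refine setIntegral_congr_fun measurableSet_ball (fun x hx => ?_)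
      rw [show W x = 1 from b.one_of_mem_closedBall (Metric.ball_subset_closedBall hx),
        Real.one_rpow]
    have h2 : ∫ _x in Metric.ball (0 : Euc N) 1, (1:ℝ)
        = (volume (Metric.ball (0 : Euc N) 1)).toReal := by simp [measureReal_def]
    have h3 : 0 < (volume (Metric.ball (0 : Euc N) 1)).toReal :=
      ENNReal.toReal_pos (Metric.measure_ball_pos volume _ one_pos).ne' measure_ball_lt_top.ne
    have h4 : ∫ x in Metric.ball (0 : Euc N) 1, W x ^ p ≤ B :=
      setIntegral_le_integral hWp_int
        (Filter.Eventually.of_forall fun x => Real.rpow_nonneg (hWnn x) p)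
    rw [h1, h2] at h4
    linarith
  -- integrability of the nonlinear term
  have hGint : ∀ s : ℝ, Integrable (fun x => G (s * W x)) volume := by
    intro s
    have hc : Continuous fun x => G (s * W x) := hGcont.comp (continuous_const.mul hWcont)
    have hsupp : HasCompactSupport fun x => G (s * W x) := by
      have := hWsupp.comp_left (g := fun y : ℝ => G (s * y)) (by simp [hG0])
      exact this
    exact hc.integrable_of_hasCompactSupport hsupp
  -- value of the functional on the ray
  have hIval : ∀ (lam s : ℝ), Ifun V lam G (H1.smulH s v₀)
      = 1/2 * (s ^ 2 * A) - lam * ∫ x, G (s * W x) := by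
    intro lam s
    have h2 : ∫ x, (‖(s • dW) x‖ ^ 2 + V x * (s * W x) ^ 2) = s ^ 2 * A := by
      have heq : (fun x => (‖(s • dW) x‖ ^ 2 + V x * (s * W x) ^ 2))
          = fun x => s ^ 2 * (‖dW x‖ ^ 2 + V x * W x ^ 2) := by
        funext x
        simp only [Pi.smul_apply, norm_smul, Real.norm_eq_abs, mul_pow, sq_abs]
        ring
      rw [heq, integral_const_mul, hAdef]
    simp only [Ifun, IfunR, hsu, hsdu]
    rw [h2]
  -- lower bound for the nonlinear term
  have hlow : ∀ s : ℝ, 0 ≤ s → ct * s ^ p * B ≤ ∫ x, G (s * W x) := by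
    intro s hs
    have hmono : ∫ x, ct * s ^ p * W x ^ p ≤ ∫ x, G (s * W x) := by
      refine integral_mono (hWp_int.const_mul _) (hGint s) ?_
      intro x
      have h := hGlow (s * W x) (mul_nonneg hs (hWnn x))
      calc ct * s ^ p * W x ^ p = ct * (s * W x) ^ p := by
            rw [Real.mul_rpow hs (hWnn x)]; ring
        _ ≤ G (s * W x) := h
    calc ct * s ^ p * B = ∫ x, ct * s ^ p * W x ^ p := (integral_const_mul _ _).symm
      _ ≤ _ := hmono
  -- the constant M
  set M0 : ℝ := (A/2) * ((A/2) / (ct * B)) ^ (2 / (p - 2)) with hM0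
  have hM00 : 0 ≤ M0 :=
    mul_nonneg (by linarith) (Real.rpow_nonneg (div_nonneg (by linarith) (by positivity)) _)
  refine ⟨M0 + 1, by linarith, ?_⟩
  intro lam hlam
  have hexp : 0 < lam ^ (-(2:ℝ) / (p - 2)) := Real.rpow_pos_of_pos hlam _
  have hbndnn : 0 ≤ (M0 + 1) * lam ^ (-(2:ℝ) / (p - 2)) :=
    mul_nonneg (by linarith) hexp.le
  -- per-point energy bound
  have hbound : ∀ s : ℝ, 0 ≤ s →
      Ifun V lam G (H1.smulH s v₀) ≤ M0 * lam ^ (-(2:ℝ) / (p - 2)) := by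
    intro s hs
    rw [hIval lam s]
    have h1 : lam * (ct * s ^ p * B) ≤ lam * ∫ x, G (s * W x) :=
      mul_le_mul_of_nonneg_left (hlow s hs) hlam.le
    have hd : 0 < lam * ct * B := by positivity
    have h2 := keyineq (a := A/2) (d := lam * ct * B) (by linarith) hd hp hs
    have h3 : (A/2) * ((A/2) / (lam * ct * B)) ^ (2 / (p - 2))
        = M0 * lam ^ (-(2:ℝ) / (p - 2)) := by
      rw [hM0]
      have hsplit : (A/2) / (lam * ct * B) = ((A/2) / (ct * B)) / lam := by
        rw [div_div]
        ring_nf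
      rw [hsplit, Real.div_rpow (div_nonneg (by linarith) (by positivity)) hlam.le,
        show -(2:ℝ) / (p - 2) = -(2 / (p - 2)) by ring, Real.rpow_neg hlam.le]
      ring
    have e1 : 1/2 * (s ^ 2 * A) = (A/2) * s ^ 2 := by ring
    have e2 : lam * (ct * s ^ p * B) = (lam * ct * B) * s ^ p := by ring
    linarith [h1, h2, h3.ge, h3.le]
  -- choice of T
  set Y : ℝ := (A/2) / (lam * ct * B) with hY
  have hY0 : 0 ≤ Y := div_nonneg (by linarith) (by positivity)
  set T : ℝ := Y ^ ((1:ℝ) / (p - 2)) + 1 with hT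
  have hT1 : 1 ≤ T := le_add_of_nonneg_left (Real.rpow_nonneg hY0 _)
  have hT0 : 0 < T := by linarith
  have hTgt : Y < T ^ (p - 2) := by
    have h1 : Y ^ ((1:ℝ) / (p - 2)) < T := by rw [hT]; linarith
    have h2 : (Y ^ ((1:ℝ) / (p - 2))) ^ (p - 2) < T ^ (p - 2) :=
      Real.rpow_lt_rpow (Real.rpow_nonneg hY0 _) h1 (by linarith)
    rw [← Real.rpow_mul hY0, show (1:ℝ) / (p - 2) * (p - 2) = 1 from by
      rw [one_div, inv_mul_cancel₀ (by linarith : p - (2:ℝ) ≠ 0)], Real.rpow_one] at h2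
    exact h2
  have hneg : Ifun V lam G (H1.smulH T v₀) < 0 := by
    rw [hIval lam T]
    have h1 := hlow T (by linarith)
    have h2 : lam * (ct * T ^ p * B) ≤ lam * ∫ x, G (T * W x) :=
      mul_le_mul_of_nonneg_left h1 hlam.le
    have hTp : T ^ p = T ^ (p - 2) * T ^ 2 := by
      rw [← Real.rpow_natCast T 2, ← Real.rpow_add hT0]
      norm_num
    have hT2 : 0 < T ^ 2 := by positivity
    have hd : 0 < lam * ct * B := by positivity
    have h4 : A/2 < T ^ (p - 2) * (lam * ct * B) := by
      have h5 := hTgt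
      rw [hY] at h5
      exact (div_lt_iff₀ hd).mp h5
    have h6 : (A/2) * T ^ 2 < lam * (ct * T ^ p * B) := by
      calc (A/2) * T ^ 2 < T ^ (p - 2) * (lam * ct * B) * T ^ 2 :=
            mul_lt_mul_of_pos_right h4 hT2
        _ = lam * (ct * (T ^ (p - 2) * T ^ 2) * B) := by ring
        _ = lam * (ct * T ^ p * B) := by rw [← hTp]
    linarith [h2, h6]
  -- the path
  set γ : ℝ → H1 N := fun t => H1.smulH (t * T) v₀ with hγ
  have hγ0 : γ 0 = H1.zero N := by
    apply H1ext
    · funext x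
      show (0 : ℝ) * T * W x = 0
      ring
    · funext x
      show ((0 : ℝ) * T) • dW x = 0
      simp
  -- continuity of the path
  set aN : ℝ := (eLpNorm W 2 volume).toReal with haN
  set bN : ℝ := (eLpNorm dW 2 volume).toReal with hbN
  set K : ℝ := Real.sqrt (aN ^ 2 + bN ^ 2) with hK
  have hK0 : 0 ≤ K := Real.sqrt_nonneg _
  have hdist : ∀ s t : ℝ, H1.dist (γ s) (γ t) = |s - t| * T * K := by
    intro s t
    have hu : (fun x => (γ s).u x - (γ t).u x) = ((s - t) * T) • W := by
      funext x
      show s * T * W x - t * T * W x = ((s - t) * T) * W x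
      ring
    have hdu : (fun x => (γ s).du x - (γ t).du x) = ((s - t) * T) • dW := by
      funext x
      show (s * T) • dW x - (t * T) • dW x = ((s - t) * T) • dW x
      rw [← sub_smul, ← sub_mul]
    simp only [H1.dist]
    rw [hu, hdu, eLpNorm_const_smul, eLpNorm_const_smul]
    simp only [ENNReal.toReal_mul, ENNReal.coe_toReal, coe_nnnorm, toReal_enorm, Real.norm_eq_abs]
    rw [show (|(s - t) * T| * aN) ^ 2 + (|(s - t) * T| * bN) ^ 2
        = ((s - t) * T) ^ 2 * (aN ^ 2 + bN ^ 2) from by rw [← sq_abs ((s-t)*T)]; ring,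
      Real.sqrt_mul (sq_nonneg _), Real.sqrt_sq_eq_abs, abs_mul, abs_of_pos hT0, hK]
  have hcts : H1PathCts γ := by
    intro t _ht ε hε
    refine ⟨ε / (T * (K + 1)), by positivity, ?_⟩
    intro s _hs hst
    rw [hdist s t]
    calc |s - t| * T * K ≤ |s - t| * T * (K + 1) := by
          have h0 : 0 ≤ |s - t| * T := mul_nonneg (abs_nonneg _) hT0.le
          nlinarith
      _ < (ε / (T * (K + 1))) * T * (K + 1) := by
          have hTK : 0 < T * (K + 1) := by positivity
          have := mul_lt_mul_of_pos_right hst hTK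
          calc |s - t| * T * (K + 1) = |s - t| * (T * (K + 1)) := by ring
            _ < (ε / (T * (K + 1))) * (T * (K + 1)) := by
                exact mul_lt_mul_of_pos_right hst hTK
            _ = (ε / (T * (K + 1))) * T * (K + 1) := by ring
      _ = ε := by
          field_simp
  have hγ1 : Ifun V lam G (γ 1) < 0 := by
    show Ifun V lam G (H1.smulH (1 * T) v₀) < 0
    rw [one_mul]
    exact hneg
  have hmem : γ ∈ MPpaths V lam G := ⟨hcts, hγ0, hγ1⟩
  have hsup : sSup ((fun t => Ifun V lam G (γ t)) '' Icc (0:ℝ) 1)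
      ≤ (M0 + 1) * lam ^ (-(2:ℝ) / (p - 2)) := by
    apply Real.sSup_le
    · rintro x ⟨t, ht, rfl⟩
      have h1 := hbound (t * T) (mul_nonneg ht.1 hT0.le)
      have h2 : M0 * lam ^ (-(2:ℝ) / (p - 2)) ≤ (M0 + 1) * lam ^ (-(2:ℝ) / (p - 2)) := by
        nlinarith
      exact le_trans h1 h2
    · exact hbndnn
  have hmemC : sSup ((fun t => Ifun V lam G (γ t)) '' Icc (0:ℝ) 1)
      ∈ {c | ∃ γ' ∈ MPpaths V lam G,
        c = sSup ((fun t => Ifun V lam G (γ' t)) '' Icc (0:ℝ) 1)} := ⟨γ, hmem, rfl⟩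
  by_cases hbb : BddBelow {c | ∃ γ' ∈ MPpaths V lam G,
      c = sSup ((fun t => Ifun V lam G (γ' t)) '' Icc (0:ℝ) 1)}
  · exact le_trans (csInf_le hbb hmemC) hsup
  · rw [MPlevel, Real.sInf_of_not_bddBelow hbb]
    linarith
end
end
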